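/- arXiv:2305.01258 — 6 statements merged into one kernel-verified Lean document; each statement's English description precedes it below -/
import Mathlib

section
/- If a sequence (M_p) of positive reals satisfies the stability condition (there exists H > 0 such that C(p,j) M_{p-j} M_j ≤ M_p ≤ H^p M_{p-j} M_j for all p ∈ ℕ and j ≤ p), then for every natural number m ≥ 1 there exists B ≥ 0 such that M_{pm} ≤ B^p (M_p)^m for all p ∈ ℕ. -/
/-- If a sequence `(M p)` of positive reals satisfies the stability condition
(there exists `H > 0` such that `choose p j * M (p-j) * M j ≤ M p ≤ H^p * M (p-j) * M j`
for all `p` and `j ≤ p`), then for every natural `m ≥ 1` there exists `B ≥ 0` such that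
`M (p*m) ≤ B^p * (M p)^m` for all `p`. -/
theorem stability_power_bound (M : ℕ → ℝ) (hpos : ∀ p, 0 < M p)
    (hstab : ∃ H > (0 : ℝ), ∀ p j : ℕ, j ≤ p →
      (p.choose j : ℝ) * (M (p - j) * M j) ≤ M p ∧ M p ≤ H ^ p * (M (p - j) * M j)) :
    ∀ m : ℕ, 1 ≤ m → ∃ B : ℝ, 0 ≤ B ∧ ∀ p : ℕ, M (p * m) ≤ B ^ p * (M p) ^ m := by
  obtain ⟨H, hH, hst⟩ := hstab
  -- M 0 ≤ 1
  have hM0 : M 0 ≤ 1 := by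
    have h0 := (hst 0 0 le_rfl).1
    simp at h0
    nlinarith [hpos 0]
  have hH1 : 1 ≤ H := by
    have h1 := (hst 1 0 (by norm_num)).2
    simp at h1
    have hHM0 : 1 ≤ H * M 0 := by nlinarith [hpos 1]
    nlinarith [hM0, hH, hHM0]
  -- key induction
  have key : ∀ m : ℕ, 1 ≤ m → ∀ p : ℕ, M (p * m) ≤ H ^ (p * m * m) * M p ^ m := by
    intro m hm
    induction m with
    | zero => omega
    | succ n ih =>
      intro p
      rcases Nat.eq_or_lt_of_le hm with h1 | h1
      · -- n+1 = 1
        have hn : n = 0 := by omega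
        subst hn
        simp only [Nat.zero_add, Nat.mul_one, pow_one]
        nlinarith [one_le_pow₀ hH1 (n := p), hpos p]
      · have hn : 1 ≤ n := by omega
        have step := (hst (p * (n + 1)) p (by nlinarith)).2
        have hsub : p * (n + 1) - p = p * n := by rw [Nat.mul_succ, Nat.add_sub_cancel]
        rw [hsub] at step
        have ihp := ih hn p
        have hHpow : (0:ℝ) < H ^ (p * (n + 1)) := pow_pos hH _
        calc M (p * (n + 1)) ≤ H ^ (p * (n + 1)) * (M (p * n) * M p) := step
          _ ≤ H ^ (p * (n + 1)) * ((H ^ (p * n * n) * M p ^ n) * M p) := by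
              apply mul_le_mul_of_nonneg_left _ (le_of_lt hHpow)
              exact mul_le_mul_of_nonneg_right ihp (le_of_lt (hpos p))
          _ = H ^ (p * (n + 1) + p * n * n) * M p ^ (n + 1) := by
              rw [pow_add, pow_succ]; ring
          _ ≤ H ^ (p * (n + 1) * (n + 1)) * M p ^ (n + 1) := by
              apply mul_le_mul_of_nonneg_right _ (le_of_lt (pow_pos (hpos p) _))
              exact pow_le_pow_right₀ hH1 (by nlinarith)
  intro m hm
  refine ⟨H ^ (m * m), le_of_lt (pow_pos hH _), fun p => ?_⟩
  have := key m hm p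
  calc M (p * m) ≤ H ^ (p * m * m) * M p ^ m := this
    _ = (H ^ (m * m)) ^ p * M p ^ m := by rw [← pow_mul]; ring_nf
end

section
/- If a sequence (M_p) of positive reals with M_0 = 1 satisfies logarithmic convexity and the stability condition, then for every rational m = r/s > 0 there exists B ≥ 0 such that for all p ∈ ℕ with pm ∈ ℕ, one has M_{pm} ≤ B^p (M_p)^m. -/
/-!
Log-convexity with `M 0 = 1` makes the ratios `M (i + 1) / M i` nondecreasing, so `M p ^ (1 / p)`
is nondecreasing: `M q ≤ M n ^ (q / n)` for `q ≤ n`. Iterating the upper stability bound (with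
`H ≥ 1`) gives `M (k * p) ≤ H ^ (k * k * p) * M p ^ k`. With `k = ⌈m⌉₊` and `n = k * p ≥ q = p * m`
we have `q / n = m / k ≤ 1`, whence
`M q ≤ (H ^ (k * k * p) * M p ^ k) ^ (m / k) ≤ (H ^ (k * k)) ^ p * M p ^ m`.
-/

open Real

section

variable {M : ℕ → ℝ}

theorem monotone_succ_div_of_sq_le (hpos : ∀ p, 0 < M p)
    (hlc : ∀ p : ℕ, 1 ≤ p → M p ^ 2 ≤ M (p - 1) * M (p + 1)) :
    Monotone fun i => M (i + 1) / M i := by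
  refine monotone_nat_of_le_succ fun i => ?_
  have hsq := hlc (i + 1) (by omega)
  rw [Nat.add_sub_cancel] at hsq
  rw [div_le_div_iff₀ (hpos _) (hpos _)]
  nlinarith

theorem le_succ_div_pow_of_sq_le (hpos : ∀ p, 0 < M p) (h0 : M 0 = 1)
    (hlc : ∀ p : ℕ, 1 ≤ p → M p ^ 2 ≤ M (p - 1) * M (p + 1)) {q j : ℕ} (hqj : q ≤ j) :
    M q ≤ (M (j + 1) / M j) ^ q := by
  induction q with
  | zero => simp [h0]
  | succ q ih =>
    have hmono := monotone_succ_div_of_sq_le hpos hlc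
    calc M (q + 1) = M q * (M (q + 1) / M q) := (mul_div_cancel₀ _ (hpos q).ne').symm
      _ ≤ (M (j + 1) / M j) ^ q * (M (j + 1) / M j) :=
        mul_le_mul (ih (by omega)) (hmono (by omega : q ≤ j)) (div_pos (hpos _) (hpos _)).le
          (pow_nonneg (div_pos (hpos _) (hpos _)).le _)
      _ = (M (j + 1) / M j) ^ (q + 1) := (pow_succ _ _).symm

theorem pow_add_le_pow_of_sq_le (hpos : ∀ p, 0 < M p) (h0 : M 0 = 1)
    (hlc : ∀ p : ℕ, 1 ≤ p → M p ^ 2 ≤ M (p - 1) * M (p + 1)) (q d : ℕ) :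
    M q ^ (q + d) ≤ M (q + d) ^ q := by
  induction d with
  | zero => rfl
  | succ d ih =>
    calc M q ^ (q + (d + 1)) = M q ^ (q + d) * M q := by ring
      _ ≤ M (q + d) ^ q * (M (q + d + 1) / M (q + d)) ^ q :=
        mul_le_mul ih (le_succ_div_pow_of_sq_le hpos h0 hlc (by omega)) (hpos q).le
          (pow_nonneg (hpos _).le _)
      _ = M (q + (d + 1)) ^ q := by
        rw [← mul_pow, mul_div_cancel₀ _ (hpos _).ne', add_assoc]

theorem le_rpow_div_of_sq_le (hpos : ∀ p, 0 < M p) (h0 : M 0 = 1)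
    (hlc : ∀ p : ℕ, 1 ≤ p → M p ^ 2 ≤ M (p - 1) * M (p + 1)) {q n : ℕ} (hqn : q ≤ n)
    (hn : n ≠ 0) : M q ≤ M n ^ ((q : ℝ) / n) := by
  have hpow := pow_add_le_pow_of_sq_le hpos h0 hlc q (n - q)
  rw [Nat.add_sub_cancel' hqn] at hpow
  calc M q = (M q ^ n) ^ (n⁻¹ : ℝ) := (pow_rpow_inv_natCast (hpos q).le hn).symm
    _ ≤ (M n ^ q) ^ (n⁻¹ : ℝ) := by gcongr; exact pow_nonneg (hpos q).le n
    _ = M n ^ ((q : ℝ) / n) := by rw [← rpow_natCast_mul (hpos n).le, div_eq_mul_inv]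

theorem le_pow_mul_pow_of_le_pow_mul (hnn : ∀ p, 0 ≤ M p) (h0 : M 0 = 1)
    {H : ℝ} (hH : 1 ≤ H) (hsub : ∀ a b : ℕ, M (a + b) ≤ H ^ (a + b) * (M a * M b))
    (k p : ℕ) : M (k * p) ≤ H ^ (k * k * p) * M p ^ k := by
  induction k with
  | zero => simp [h0]
  | succ k ih =>
    calc M ((k + 1) * p) = M (k * p + p) := by rw [add_mul, one_mul]
      _ ≤ H ^ (k * p + p) * (M (k * p) * M p) := hsub _ _
      _ ≤ H ^ (k * p + p) * (H ^ (k * k * p) * M p ^ k * M p) := by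
        gcongr
        exact hnn p
      _ = H ^ (k * p + p + k * k * p) * M p ^ (k + 1) := by ring
      _ ≤ H ^ ((k + 1) * (k + 1) * p) * M p ^ (k + 1) :=
        mul_le_mul_of_nonneg_right (pow_le_pow_right₀ hH (by nlinarith)) (pow_nonneg (hnn p) _)

end

theorem le_mul_rpow_of_le_rpow_div {x y z C m : ℝ} {k : ℕ} (hx : 0 < x) (hC : 1 ≤ C)
    (hm : 0 < m) (hmk : m ≤ k) (hy : y ≤ z ^ (m / k)) (hz : z ≤ C * x ^ k) (hz0 : 0 ≤ z) :
    y ≤ C * x ^ m := by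
  have hk : (k : ℝ) ≠ 0 := (hm.trans_le hmk).ne'
  calc y ≤ (C * x ^ k) ^ (m / k) := hy.trans (rpow_le_rpow hz0 hz (by positivity))
    _ = C ^ (m / k) * x ^ m := by
        rw [mul_rpow (by positivity) (by positivity), ← rpow_natCast_mul hx.le,
          mul_div_cancel₀ _ hk]
    _ ≤ C * x ^ m := by
        gcongr
        exact rpow_le_self_of_one_le hC (div_le_one_of_le₀ hmk k.cast_nonneg)

/-- If `(M p)` is a sequence of positive reals with `M 0 = 1` satisfying logarithmic
convexity and the stability condition, then for every positive rational `m` there exists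
`B ≥ 0` such that for all `p` with `p * m ∈ ℕ` one has `M (p*m) ≤ B^p * (M p)^m`. -/
theorem stability_rational_power_bound (M : ℕ → ℝ) (hpos : ∀ p, 0 < M p) (h0 : M 0 = 1)
    (hlc : ∀ p : ℕ, 1 ≤ p → (M p) ^ 2 ≤ M (p - 1) * M (p + 1))
    (hstab : ∃ H > (0 : ℝ), ∀ p j : ℕ, j ≤ p →
      (p.choose j : ℝ) * (M (p - j) * M j) ≤ M p ∧ M p ≤ H ^ p * (M (p - j) * M j))
    (m : ℚ) (hm : 0 < m) :
    ∃ B : ℝ, 0 ≤ B ∧ ∀ p q : ℕ, (q : ℚ) = (p : ℚ) * m →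
      M q ≤ B ^ p * (M p) ^ (m : ℝ) := by
  obtain ⟨H, hH, hstab⟩ := hstab
  have hsub (a b : ℕ) : M (a + b) ≤ max H 1 ^ (a + b) * (M a * M b) := by
    have h := (hstab (a + b) b (by omega)).2
    rw [Nat.add_sub_cancel] at h
    exact h.trans (by gcongr; exacts [(mul_pos (hpos a) (hpos b)).le, le_max_left _ _])
  set k := ⌈m⌉₊
  have hk : 0 < k := Nat.ceil_pos.mpr hm
  refine ⟨max H 1 ^ (k * k), by positivity, fun p q hq => ?_⟩
  rcases Nat.eq_zero_or_pos p with rfl | hp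
  · obtain rfl : q = 0 := by exact_mod_cast hq.trans (zero_mul m)
    simp [h0]
  have hqn : q ≤ k * p := by
    have : (q : ℚ) ≤ k * p := by rw [hq, mul_comm]; gcongr; exact Nat.le_ceil m
    exact_mod_cast this
  have hexp : (q : ℝ) / (k * p : ℕ) = m / k := by
    rw [show (q : ℝ) = p * m by exact_mod_cast hq]
    push_cast
    field_simp
  rw [← pow_mul]
  refine le_mul_rpow_of_le_rpow_div (hpos p) (one_le_pow₀ (le_max_right _ _))
    (by exact_mod_cast hm) (by exact_mod_cast Nat.le_ceil m) ?_
    (le_pow_mul_pow_of_le_pow_mul (fun p => (hpos p).le) h0 (le_max_right _ _) hsub k p)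
    (hpos _).le
  rw [← hexp]
  exact le_rpow_div_of_sq_le hpos h0 hlc hqn (by positivity)
end

section
/- If a polynomial Q on ℝ^n satisfies the d-hypoellipticity estimate (there exists C > 0 with |ξ|^{|β|/d} |Q^{(β)}(ξ)| ≤ C(1 + |Q(ξ)|) for all multi-indices β and all ξ ∈ ℝ^n), then for every positive integer μ, the polynomial Q^μ also satisfies the d-hypoellipticity estimate (with a possibly different constant). -/
/-- The iterated partial derivative `∂^α Q` of a multivariate polynomial, for a
multi-index `α`. -/
noncomputable def polyDeriv {n : ℕ} (α : Fin n →₀ ℕ) :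
    Module.End ℂ (MvPolynomial (Fin n) ℂ) :=
  ((List.finRange n).map (fun i => (MvPolynomial.pderiv i).toLinearMap ^ (α i))).prod

/-- The `d`-hypoellipticity estimate for a polynomial `Q` on `ℝⁿ`:
`∃ C > 0, ∀ β, ∀ ξ, |ξ|^(|β|/d) * |Q^{(β)}(ξ)| ≤ C * (1 + |Q(ξ)|)`. -/
def HypoellipticEst {n : ℕ} (d : ℝ) (Q : MvPolynomial (Fin n) ℂ) : Prop :=
  ∃ C > (0 : ℝ), ∀ β : Fin n →₀ ℕ, ∀ ξ : EuclideanSpace ℝ (Fin n),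
    ‖ξ‖ ^ (((β.sum fun _ k => k : ℕ) : ℝ) / d) *
        ‖MvPolynomial.eval (fun i => (ξ i : ℂ)) (polyDeriv β Q)‖ ≤
      C * (1 + ‖MvPolynomial.eval (fun i => (ξ i : ℂ)) Q‖)

/-!
Put `t = ‖ξ‖ ^ (1 / d)`, so that the estimate says `t ^ |β| * ∂^β Q = O(1 + |Q|)` for every `β`.
Call `P` of order `F` with shift `k` (`DerivIsBigO`) if `t ^ (|β| + k) * ∂^β P = O(F)` for every
`β`. This class is closed under each `∂ᵢ` (which raises the shift by one), hence, by the Leibniz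
rule and induction on `β`, under products, where orders multiply and shifts add. So `Q ^ μ` has
order `(1 + |Q|) ^ μ`. Only the finitely many `β` with `|β| ≤ deg (Q ^ μ)` give nonzero
derivatives, so the constants can be chosen uniformly in `β`, and
`(1 + |Q|) ^ μ ≤ 2 ^ (μ - 1) * (1 + |Q ^ μ|)`.
-/

open MvPolynomial Finsupp Function Asymptotics

@[elab_as_elim]
theorem Finsupp.induction_add_single_one {ι : Type*} {motive : (ι →₀ ℕ) → Prop} (β : ι →₀ ℕ)
    (zero : motive 0) (add_single_one : ∀ β i, motive β → motive (β + single i 1)) :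
    motive β := by
  induction β using Finsupp.induction₂ with
  | zero => exact zero
  | add_single i b β _ _ hβ =>
    clear * - hβ add_single_one
    induction b with
    | zero => simpa using hβ
    | succ b ih => rw [single_add, ← add_assoc]; exact add_single_one _ _ ih

namespace MvPolynomial

variable {R σ : Type*} [CommSemiring R]

theorem pderiv_pderiv_comm (i j : σ) (p : MvPolynomial σ R) :
    pderiv i (pderiv j p) = pderiv j (pderiv i p) := by
  classical
  ext m
  rcases eq_or_ne i j with rfl | hij
  · rfl
  simp only [coeff_pderiv, Finsupp.add_apply, single_eq_of_ne hij, single_eq_of_ne hij.symm,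
    add_zero, add_right_comm m (single i 1)]
  ring

theorem totalDegree_pderiv_lt {i : σ} {p : MvPolynomial σ R} (h : pderiv i p ≠ 0) :
    (pderiv i p).totalDegree < p.totalDegree := by
  obtain ⟨m, hm, hdeg⟩ := Finset.exists_mem_eq_sup _ (support_nonempty.2 h) (fun m => m.degree)
  have hcoeff : coeff (m + single i 1) p ≠ 0 := by
    rw [mem_support_iff, coeff_pderiv] at hm
    exact left_ne_zero_of_mul hm
  calc (pderiv i p).totalDegree = m.degree := hdeg
    _ < (m + single i 1).degree := by simp
    _ ≤ p.totalDegree := le_totalDegree (mem_support_iff.2 hcoeff)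

end MvPolynomial

section polyDeriv

variable {n : ℕ}

theorem commute_pderiv (i j : Fin n) :
    Commute ((pderiv i).toLinearMap : Module.End ℂ (MvPolynomial (Fin n) ℂ))
      (pderiv j).toLinearMap :=
  LinearMap.ext (pderiv_pderiv_comm i j)

theorem pairwise_commute_pderiv_pow (α : Fin n →₀ ℕ) (s : Set (Fin n)) :
    s.Pairwise (Commute on fun i =>
      ((pderiv i).toLinearMap : Module.End ℂ (MvPolynomial (Fin n) ℂ)) ^ α i) :=
  fun i _ j _ _ => (commute_pderiv i j).pow_pow _ _

theorem polyDeriv_eq_noncommProd (α : Fin n →₀ ℕ) :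
    polyDeriv α = Finset.univ.noncommProd _ (pairwise_commute_pderiv_pow α _) := by
  rw [polyDeriv, ← Finset.noncommProd_toFinset _ _ (pairwise_commute_pderiv_pow α _)
    (List.nodup_finRange n)]
  exact Finset.noncommProd_congr (List.toFinset_finRange n) (fun _ _ => rfl) _

theorem polyDeriv_add (α β : Fin n →₀ ℕ) : polyDeriv (α + β) = polyDeriv α * polyDeriv β := by
  rw [polyDeriv_eq_noncommProd, polyDeriv_eq_noncommProd, polyDeriv_eq_noncommProd,
    ← Finset.noncommProd_mul_distrib _ _ _ _ fun i _ j _ _ => (commute_pderiv i j).pow_pow _ _]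
  exact Finset.noncommProd_congr rfl (fun i _ => pow_add _ _ _) _

theorem polyDeriv_single (i : Fin n) : polyDeriv (single i 1) = (pderiv i).toLinearMap := by
  classical
  rw [polyDeriv_eq_noncommProd, ← Finset.noncommProd_erase_mul _ (Finset.mem_univ i) _ _
    (pairwise_commute_pderiv_pow _ _), Finset.noncommProd_eq_pow_card _ _ _ 1, one_pow, one_mul,
    single_eq_same, pow_one]
  intro j hj
  rw [single_eq_of_ne (Finset.ne_of_mem_erase hj), pow_zero]

theorem polyDeriv_zero : polyDeriv (0 : Fin n →₀ ℕ) = 1 := by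
  simp [polyDeriv]

theorem polyDeriv_add_single_apply (β : Fin n →₀ ℕ) (i : Fin n) (p : MvPolynomial (Fin n) ℂ) :
    polyDeriv (β + single i 1) p = polyDeriv β (pderiv i p) := by
  rw [polyDeriv_add, polyDeriv_single, Module.End.mul_apply, Derivation.coeFn_coe]

theorem polyDeriv_eq_zero_of_totalDegree_lt {β : Fin n →₀ ℕ} {p : MvPolynomial (Fin n) ℂ}
    (h : p.totalDegree < β.degree) : polyDeriv β p = 0 := by
  induction β using Finsupp.induction_add_single_one generalizing p with
  | zero => simp at h
  | add_single_one β i ih =>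
    rw [polyDeriv_add_single_apply]
    by_cases hp : pderiv i p = 0
    · rw [hp, map_zero]
    · apply ih
      have := totalDegree_pderiv_lt hp
      simp only [map_add, degree_single] at h
      omega

end polyDeriv

section

variable {n : ℕ} {ι : Type*} {l : Filter ι} {x : ι → Fin n → ℂ} {w : ι → ℂ}

def DerivIsBigO (l : Filter ι) (x : ι → Fin n → ℂ) (w : ι → ℂ) (F : ι → ℝ) (k : ℕ)
    (P : MvPolynomial (Fin n) ℂ) : Prop :=
  ∀ β : Fin n →₀ ℕ, (fun i => w i ^ (β.degree + k) * eval (x i) (polyDeriv β P)) =O[l] F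

namespace DerivIsBigO

variable {F G : ι → ℝ} {k m : ℕ} {P R : MvPolynomial (Fin n) ℂ}

theorem add (hP : DerivIsBigO l x w F k P) (hR : DerivIsBigO l x w F k R) :
    DerivIsBigO l x w F k (P + R) := fun β =>
  ((hP β).add (hR β)).congr_left fun i => by rw [map_add, map_add, mul_add]

theorem pderiv (hP : DerivIsBigO l x w F k P) (j : Fin n) :
    DerivIsBigO l x w F (k + 1) (pderiv j P) := fun β =>
  (hP (β + single j 1)).congr_left fun i => by
    rw [polyDeriv_add_single_apply, map_add, degree_single, add_right_comm, add_assoc]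

theorem mul (hP : DerivIsBigO l x w F k P) (hR : DerivIsBigO l x w G m R) :
    DerivIsBigO l x w (F * G) (k + m) (P * R) := by
  intro β
  induction β using Finsupp.induction_add_single_one generalizing k m P R with
  | zero =>
    refine ((hP 0).mul (hR 0)).congr_left fun i => ?_
    simp only [polyDeriv_zero, Module.End.one_apply, map_zero, eval_mul]
    ring
  | add_single_one β j ih =>
    refine ((ih (hP.pderiv j) hR).add (ih hP (hR.pderiv j))).congr_left fun i => ?_
    rw [polyDeriv_add_single_apply, pderiv_mul, map_add, map_add, map_add, degree_single]
    ring

theorem one : DerivIsBigO l x w 1 0 1 := by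
  intro β
  rcases eq_or_ne β 0 with rfl | hβ
  · refine (isBigO_const_const (1 : ℂ) one_ne_zero l).congr (fun i => ?_) fun _ => rfl
    simp [polyDeriv_zero]
  · have : polyDeriv β (1 : MvPolynomial (Fin n) ℂ) = 0 :=
      polyDeriv_eq_zero_of_totalDegree_lt (by simpa [pos_iff_ne_zero, degree_eq_zero_iff])
    simpa [this] using isBigO_zero _ _

theorem pow (hP : DerivIsBigO l x w F 0 P) (μ : ℕ) : DerivIsBigO l x w (F ^ μ) 0 (P ^ μ) := by
  induction μ with
  | zero => simpa using one
  | succ μ ih => simpa [pow_succ] using ih.mul hP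

theorem exists_isBigOWith (hP : DerivIsBigO l x w F k P) :
    ∃ C, 0 ≤ C ∧ ∀ β : Fin n →₀ ℕ,
      IsBigOWith C l (fun i => w i ^ (β.degree + k) * eval (x i) (polyDeriv β P)) F := by
  have hfin := finite_of_degree_le (σ := Fin n) P.totalDegree
  choose C hC using fun β => (hP β).isBigOWith
  set K := ∑ β ∈ hfin.toFinset, max (C β) 0
  have hK : 0 ≤ K := by positivity
  refine ⟨K, hK, fun β => ?_⟩
  by_cases hβ : β.degree ≤ P.totalDegree
  · refine (hC β).weaken ((le_max_left _ 0).trans ?_)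
    exact Finset.single_le_sum (fun _ _ => le_max_right _ 0) (hfin.mem_toFinset.2 hβ)
  · simpa [polyDeriv_eq_zero_of_totalDegree_lt (not_le.1 hβ)] using isBigOWith_zero _ _ hK

end DerivIsBigO

end

theorem hypoellipticEst_pow_general {n : ℕ} (d : ℝ) (Q : MvPolynomial (Fin n) ℂ)
    (hQ : HypoellipticEst d Q) (μ : ℕ) :
    HypoellipticEst d (Q ^ μ) := by
  let x : EuclideanSpace ℝ (Fin n) → Fin n → ℂ := fun ξ i => ξ i
  let w : EuclideanSpace ℝ (Fin n) → ℂ := fun ξ => ((‖ξ‖ ^ d⁻¹ : ℝ) : ℂ)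
  have norm_weight ξ (m : ℕ) (z : ℂ) : ‖w ξ ^ m * z‖ = ‖ξ‖ ^ ((m : ℝ) / d) * ‖z‖ := by
    rw [norm_mul, norm_pow, Complex.norm_real, Real.norm_of_nonneg (by positivity),
      ← Real.rpow_mul_natCast (norm_nonneg ξ), ← div_eq_inv_mul]
  obtain ⟨C, -, hC⟩ := hQ
  have hQ' : DerivIsBigO ⊤ x w (fun ξ => 1 + ‖eval (x ξ) Q‖) 0 Q := fun β =>
    isBigO_top.2 ⟨C, fun ξ => by
      rw [norm_weight, Real.norm_of_nonneg (by positivity)]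
      exact hC β ξ⟩
  obtain ⟨K, hK, hbound⟩ := (hQ'.pow μ).exists_isBigOWith
  refine ⟨K * 2 ^ (μ - 1) + 1, by positivity, fun β ξ => ?_⟩
  have hβ := isBigOWith_top.1 (hbound β) ξ
  rw [norm_weight, Pi.pow_apply, norm_pow, Real.norm_of_nonneg (by positivity)] at hβ
  have hy := norm_nonneg (eval (x ξ) Q)
  rw [eval_pow, norm_pow]
  calc _ ≤ K * (1 + ‖eval (x ξ) Q‖) ^ μ := hβ
    _ ≤ K * (2 ^ (μ - 1) * (1 + ‖eval (x ξ) Q‖ ^ μ)) := by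
      gcongr
      simpa using add_pow_le zero_le_one hy μ
    _ ≤ (K * 2 ^ (μ - 1) + 1) * (1 + ‖eval (x ξ) Q‖ ^ μ) := by nlinarith [pow_nonneg hy μ]

/-- If a polynomial `Q` satisfies the `d`-hypoellipticity estimate, then for every
positive integer `μ` the power `Q^μ` also satisfies the `d`-hypoellipticity estimate. -/
theorem hypoellipticEst_pow {n : ℕ} (d : ℝ) (hd : 1 ≤ d) (Q : MvPolynomial (Fin n) ℂ)
    (hQ : HypoellipticEst d Q) (μ : ℕ) (hμ : 1 ≤ μ) :
    HypoellipticEst d (Q ^ μ) :=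
  hypoellipticEst_pow_general d Q hQ μ
end

section
/- Let (M_p) satisfy logarithmic convexity and stability, let m, μ be positive integers, and suppose (p!)^d ⊂ M_p (i.e., ∃ L, C₀ > 0: (p!)^d ≤ C₀ L^p M_p). If A > 0 and a sequence (a_i) satisfies a_i ≤ A^{μi+1} M_{μim} for all i, then there exists A₂ > 0 such that for all k ∈ ℕ and all i ≤ k+1: k^{(k+1-i)dmμ} · a_i ≤ A₂^{k+1} M_{kmμ}. -/
private lemma pow_le_factorial_mul_exp {x : ℝ} (hx : 0 ≤ x) (n : ℕ) :
    x ^ n ≤ n.factorial * Real.exp x := by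
  have h1 : x ^ n / n.factorial ≤ Real.exp x := by
    calc x ^ n / n.factorial ≤ ∑ i ∈ Finset.range (n+1), x ^ i / i.factorial := by
          exact Finset.single_le_sum (f := fun i => x ^ i / (i.factorial : ℝ))
            (fun i _ => by positivity) (Finset.self_mem_range_succ n)
      _ ≤ Real.exp x := Real.sum_le_exp_of_nonneg hx _
  have hn : (0:ℝ) < n.factorial := by positivity
  rw [div_le_iff₀ hn] at h1
  linarith [h1]

set_option maxHeartbeats 1000000 in
/-- Let `(M p)` satisfy logarithmic convexity and stability, let `m, μ` be positive
integers, and suppose `(p!)^d ⊂ M_p`. If `A > 0` and a sequence `(a i)` satisfies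
`a i ≤ A^(μi+1) * M (μ i m)` for all `i`, then there exists `A₂ > 0` such that for all
`k` and all `i ≤ k+1`: `k^((k+1-i) d m μ) * a i ≤ A₂^(k+1) * M (k m μ)`. -/
theorem key_iterate_estimate (M : ℕ → ℝ) (hpos : ∀ p, 0 < M p) (h0 : M 0 = 1)
    (hlc : ∀ p : ℕ, 1 ≤ p → (M p) ^ 2 ≤ M (p - 1) * M (p + 1))
    (hstab : ∃ H > (0 : ℝ), ∀ p j : ℕ, j ≤ p →
      (p.choose j : ℝ) * (M (p - j) * M j) ≤ M p ∧ M p ≤ H ^ p * (M (p - j) * M j))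
    (d : ℚ) (hd : 0 < d) (m μ : ℕ) (hm : 1 ≤ m) (hμ : 1 ≤ μ)
    (γ : ℕ) (hγ : (γ : ℚ) = d * m * μ)
    (L C₀ : ℝ) (hL : 0 < L) (hC₀ : 0 < C₀)
    (hfact : ∀ p : ℕ, (p.factorial : ℝ) ^ (d : ℝ) ≤ C₀ * L ^ p * M p)
    (A : ℝ) (hA : 0 < A) (a : ℕ → ℝ)
    (ha : ∀ i : ℕ, a i ≤ A ^ (μ * i + 1) * M (μ * i * m)) :
    ∃ A₂ > (0 : ℝ), ∀ k : ℕ, ∀ i : ℕ, i ≤ k + 1 →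
      (k : ℝ) ^ ((k + 1 - i) * γ) * a i ≤ A₂ ^ (k + 1) * M (k * m * μ) := by
  obtain ⟨H, hH, hst⟩ := hstab
  set q := m * μ with hq
  have hM : ∀ p, (0:ℝ) ≤ M p := fun p => (hpos p).le
  have hdR : (0:ℝ) ≤ (d:ℝ) := by exact_mod_cast hd.le
  have hγR : (γ:ℝ) = (d:ℝ) * m * μ := by exact_mod_cast hγ
  have hqR : (q:ℝ) = (m:ℝ) * (μ:ℝ) := by rw [hq]; push_cast; ring
  -- superadditivity of M
  have hMadd : ∀ s t : ℕ, M s * M t ≤ M (s + t) := by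
    intro s t
    have h := (hst (s+t) t (by omega)).1
    have hch : (1:ℝ) ≤ ((s+t).choose t : ℝ) := by
      exact_mod_cast Nat.one_le_iff_ne_zero.mpr (Nat.choose_pos (by omega)).ne'
    have hpos' : (0:ℝ) ≤ M (s+t-t) * M t := mul_nonneg (hM _) (hM _)
    calc M s * M t = M (s+t-t) * M t := by simp
      _ ≤ ((s+t).choose t : ℝ) * (M (s+t-t) * M t) := le_mul_of_one_le_left hpos' hch
      _ ≤ M (s+t) := h
  -- key estimate from (p!)^d ⊂ M_p
  have hD : ∀ k j : ℕ, (k:ℝ) ^ (j * γ) ≤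
      Real.exp ((d:ℝ) * k) * (C₀ * L ^ (j*q) * M (j*q)) := by
    intro k j
    have hk0 : (0:ℝ) ≤ (k:ℝ) := Nat.cast_nonneg k
    have e1 : (k:ℝ) ^ (j * γ) = ((k:ℝ) ^ (j*q)) ^ (d:ℝ) := by
      rw [← Real.rpow_natCast (k:ℝ) (j*q), ← Real.rpow_mul hk0,
        ← Real.rpow_natCast (k:ℝ) (j*γ)]
      congr 1
      push_cast [hγR, hqR]
      ring
    rw [e1]
    calc ((k:ℝ) ^ (j*q)) ^ (d:ℝ) ≤ (((j*q).factorial : ℝ) * Real.exp k) ^ (d:ℝ) :=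
          Real.rpow_le_rpow (by positivity) (pow_le_factorial_mul_exp hk0 _) hdR
      _ = ((j*q).factorial : ℝ) ^ (d:ℝ) * Real.exp ((k:ℝ) * d) := by
          rw [Real.mul_rpow (by positivity) (Real.exp_pos _).le, ← Real.exp_mul]
      _ ≤ (C₀ * L ^ (j*q) * M (j*q)) * Real.exp ((k:ℝ) * d) :=
          mul_le_mul_of_nonneg_right (hfact _) (Real.exp_pos _).le
      _ = Real.exp ((d:ℝ) * k) * (C₀ * L ^ (j*q) * M (j*q)) := by
          rw [mul_comm ((k:ℝ)) ((d:ℝ))]; ring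
  -- constants
  set B1 := Real.exp ((γ:ℝ) + d) with hB1
  set B2 := max C₀ 1 with hB2
  set B3 := (max L 1) ^ q with hB3
  set B4 := (max A 1) ^ (μ + 1) with hB4
  set B5 := (max H 1) ^ q with hB5
  set B6 := max (M q) 1 with hB6
  have hB1' : (1:ℝ) ≤ B1 := Real.one_le_exp (by positivity)
  have hB2' : (1:ℝ) ≤ B2 := le_max_right _ _
  have hB3' : (1:ℝ) ≤ B3 := one_le_pow₀ (le_max_right _ _)
  have hB4' : (1:ℝ) ≤ B4 := one_le_pow₀ (le_max_right _ _)
  have hB5' : (1:ℝ) ≤ B5 := one_le_pow₀ (le_max_right _ _)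
  have hB6' : (1:ℝ) ≤ B6 := le_max_right _ _
  refine ⟨B1*B2*B3*B4*B5*B6, by positivity, ?_⟩
  intro k i hi
  have hpowA₂ : (B1*B2*B3*B4*B5*B6)^(k+1)
      = B1^(k+1)*B2^(k+1)*B3^(k+1)*B4^(k+1)*B5^(k+1)*B6^(k+1) := by
    rw [mul_pow, mul_pow, mul_pow, mul_pow, mul_pow]
  have hidxk : k * m * μ = k * q := by rw [hq]; ring
  -- bound A^(μ*i+1) ≤ B4^(k+1) whenever i ≤ k+1
  have h4 : A ^ (μ * i + 1) ≤ B4 ^ (k+1) := by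
    have e1 : μ * i + 1 ≤ (μ+1) * (k+1) := by
      calc μ * i + 1 ≤ μ * (k+1) + (k+1) :=
            add_le_add (Nat.mul_le_mul_left _ hi) (by omega)
        _ = (μ+1) * (k+1) := by ring
    calc A ^ (μ * i + 1) ≤ (max A 1) ^ (μ * i + 1) :=
          pow_le_pow_left₀ hA.le (le_max_left _ _) _
      _ ≤ (max A 1) ^ ((μ+1) * (k+1)) := pow_le_pow_right₀ (le_max_right _ _) e1
      _ = B4 ^ (k+1) := by rw [hB4, ← pow_mul]
  rcases eq_or_lt_of_le hi with he | hlt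
  · -- case i = k + 1
    subst he
    have hidx : μ * (k+1) * m = k * q + q := by rw [hq]; ring
    have hai := ha (k+1)
    rw [hidx] at hai
    have hMk : M (k*q + q) ≤ H ^ (k*q+q) * (M (k*q) * M q) := by
      have h := (hst (k*q+q) q (by omega)).2
      simpa using h
    have h5 : H ^ (k*q+q) ≤ B5 ^ (k+1) := by
      calc H ^ (k*q+q) ≤ (max H 1) ^ (k*q+q) :=
            pow_le_pow_left₀ hH.le (le_max_left _ _) _
        _ = (max H 1) ^ (q*(k+1)) := by ring_nf
        _ = B5 ^ (k+1) := by rw [hB5, ← pow_mul]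
    have h6 : M q ≤ B6 ^ (k+1) :=
      (le_max_left _ _).trans (le_self_pow₀ hB6' (by omega))
    have hsimp : (k + 1 - (k + 1)) * γ = 0 := by simp
    rw [hsimp, pow_zero, one_mul, hpowA₂, hidxk]
    calc a (k+1) ≤ A ^ (μ*(k+1)+1) * M (k*q + q) := hai
      _ ≤ A ^ (μ*(k+1)+1) * (H ^ (k*q+q) * (M (k*q) * M q)) :=
          mul_le_mul_of_nonneg_left hMk (by positivity)
      _ = (A ^ (μ*(k+1)+1) * H ^ (k*q+q) * M q) * M (k*q) := by ring
      _ ≤ (B4^(k+1) * B5^(k+1) * B6^(k+1)) * M (k*q) := by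
          apply mul_le_mul_of_nonneg_right _ (hM _)
          apply mul_le_mul (mul_le_mul h4 h5 (by positivity) (by positivity)) h6
            (hM _) (by positivity)
      _ ≤ (B1^(k+1) * B2^(k+1) * B3^(k+1) * (B4^(k+1) * B5^(k+1) * B6^(k+1))) * M (k*q) := by
          apply mul_le_mul_of_nonneg_right _ (hM _)
          refine le_mul_of_one_le_left (by positivity) ?_
          have p1 : (1:ℝ) ≤ B1^(k+1) := one_le_pow₀ hB1'
          have p2 : (1:ℝ) ≤ B2^(k+1) := one_le_pow₀ hB2'
          have p3 : (1:ℝ) ≤ B3^(k+1) := one_le_pow₀ hB3'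
          have p12 : (1:ℝ) ≤ B1^(k+1)*B2^(k+1) :=
            p1.trans (le_mul_of_one_le_right (by positivity) p2)
          exact p12.trans (le_mul_of_one_le_right (by positivity) p3)
      _ = B1^(k+1)*B2^(k+1)*B3^(k+1)*B4^(k+1)*B5^(k+1)*B6^(k+1) * M (k*q) := by ring
  · -- case i ≤ k
    have hik : i ≤ k := by omega
    have hexp : (k + 1 - i) * γ = (k - i) * γ + γ := by
      have h1 : k + 1 - i = (k - i) + 1 := by omega
      rw [h1]; ring
    have hidx : μ * i * m = i * q := by rw [hq]; ring
    have hai := ha i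
    rw [hidx] at hai
    have hk0 : (0:ℝ) ≤ (k:ℝ) := Nat.cast_nonneg k
    have hkexp : (k:ℝ) ^ γ ≤ Real.exp ((γ:ℝ) * k) := by
      have h1 : (k:ℝ) ≤ Real.exp k := by linarith [Real.add_one_le_exp (k:ℝ)]
      calc (k:ℝ) ^ γ ≤ (Real.exp k) ^ γ := pow_le_pow_left₀ hk0 h1 γ
        _ = Real.exp ((γ:ℝ) * k) := (Real.exp_nat_mul _ γ).symm
    have hsum : (k-i)*q + i*q = k*q := by
      rw [← add_mul]; congr 1; omega
    have hMsum : M ((k-i)*q) * M (i*q) ≤ M (k*q) := by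
      have h := hMadd ((k-i)*q) (i*q); rwa [hsum] at h
    have hconst : Real.exp ((γ:ℝ)*k) * Real.exp ((d:ℝ)*k) * C₀ * L^((k-i)*q) * A^(μ*i+1)
        ≤ B1^(k+1)*B2^(k+1)*B3^(k+1)*B4^(k+1)*B5^(k+1)*B6^(k+1) := by
      have h1 : Real.exp ((γ:ℝ)*k) * Real.exp ((d:ℝ)*k) ≤ B1^(k+1) := by
        rw [← Real.exp_add, hB1, ← Real.exp_nat_mul]
        apply Real.exp_le_exp.mpr
        have hgd : (0:ℝ) ≤ (γ:ℝ) + d := by positivity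
        have hk1 : (k:ℝ) ≤ ((k+1:ℕ):ℝ) := by push_cast; linarith
        calc (γ:ℝ)*k + (d:ℝ)*k = ((γ:ℝ)+d)*k := by ring
          _ ≤ ((γ:ℝ)+d)*((k+1:ℕ):ℝ) := mul_le_mul_of_nonneg_left hk1 hgd
          _ = ((k+1:ℕ):ℝ)*((γ:ℝ)+d) := by ring
      have h2 : C₀ ≤ B2^(k+1) :=
        (le_max_left _ _).trans (le_self_pow₀ hB2' (by omega))
      have h3 : L^((k-i)*q) ≤ B3^(k+1) := by
        calc L^((k-i)*q) ≤ (max L 1)^((k-i)*q) :=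
              pow_le_pow_left₀ hL.le (le_max_left _ _) _
          _ ≤ (max L 1)^(q*(k+1)) :=
              pow_le_pow_right₀ (le_max_right _ _) (by
                calc (k-i)*q ≤ (k+1)*q := Nat.mul_le_mul_right _ (by omega)
                  _ = q*(k+1) := by ring)
          _ = B3^(k+1) := by rw [hB3, ← pow_mul]
      calc Real.exp ((γ:ℝ)*k) * Real.exp ((d:ℝ)*k) * C₀ * L^((k-i)*q) * A^(μ*i+1)
          ≤ B1^(k+1) * B2^(k+1) * B3^(k+1) * B4^(k+1) := by
            apply mul_le_mul (mul_le_mul (mul_le_mul h1 h2 hC₀.le (by positivity)) h3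
              (by positivity) (by positivity)) h4 (by positivity) (by positivity)
        _ ≤ B1^(k+1) * B2^(k+1) * B3^(k+1) * B4^(k+1) * B5^(k+1) :=
            le_mul_of_one_le_right (by positivity) (one_le_pow₀ hB5')
        _ ≤ B1^(k+1) * B2^(k+1) * B3^(k+1) * B4^(k+1) * B5^(k+1) * B6^(k+1) :=
            le_mul_of_one_le_right (by positivity) (one_le_pow₀ hB6')
    rw [hpowA₂, hidxk]
    calc (k:ℝ) ^ ((k+1-i)*γ) * a i
        ≤ (k:ℝ) ^ ((k+1-i)*γ) * (A^(μ*i+1) * M (i*q)) :=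
          mul_le_mul_of_nonneg_left hai (by positivity)
      _ = ((k:ℝ) ^ ((k-i)*γ) * (k:ℝ)^γ) * (A^(μ*i+1) * M (i*q)) := by
          rw [hexp, pow_add]
      _ ≤ ((Real.exp ((d:ℝ)*k) * (C₀ * L^((k-i)*q) * M ((k-i)*q))) * Real.exp ((γ:ℝ)*k))
            * (A^(μ*i+1) * M (i*q)) := by
          apply mul_le_mul_of_nonneg_right _ (mul_nonneg (by positivity) (hM _))
          exact mul_le_mul (hD k (k-i)) hkexp (pow_nonneg hk0 γ)
            (mul_nonneg (Real.exp_pos _).le (mul_nonneg (by positivity) (hM _)))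
      _ = (Real.exp ((γ:ℝ)*k) * Real.exp ((d:ℝ)*k) * C₀ * L^((k-i)*q) * A^(μ*i+1))
            * (M ((k-i)*q) * M (i*q)) := by ring
      _ ≤ (Real.exp ((γ:ℝ)*k) * Real.exp ((d:ℝ)*k) * C₀ * L^((k-i)*q) * A^(μ*i+1))
            * M (k*q) := mul_le_mul_of_nonneg_left hMsum (by positivity)
      _ ≤ B1^(k+1)*B2^(k+1)*B3^(k+1)*B4^(k+1)*B5^(k+1)*B6^(k+1) * M (k*q) :=
          mul_le_mul_of_nonneg_right hconst (hM _)
end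

section
/- Let C₁ > 0, γ > 0, and suppose a family of seminorms satisfies the one-step estimate: for all t > 0, ρ ≥ 0, all smooth v on ω_ρ, and all multi-indices α with |α| ≤ mν, ‖D^α v‖_{L²(ω_{ρ+t})} ≤ C₁(‖Q^μ v‖_{L²(ω_ρ)} + t^{-γ}‖v‖_{L²(ω_ρ)}). Then for all k ≥ 0, all α with |α| ≤ kmν, and all δ > 0, ‖D^α u‖_{L²(ω_δ)} ≤ C₁^k Σ_{i=0}^{k} binom(k,i) (k/δ)^{(k-i)γ} ‖Q^{μi} u‖_{L²(ω)} for all u ∈ C^∞(ω). -/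
open MeasureTheory

/-- The partial derivative `∂_i f` of a function on `ℝⁿ`. -/
noncomputable def pdOp {n : ℕ} (i : Fin n) :
    Function.End (EuclideanSpace ℝ (Fin n) → ℂ) :=
  fun f x => fderiv ℝ f x (EuclideanSpace.single i 1)

/-- The iterated partial derivative `D^α f` for a multi-index `α`. -/
noncomputable def mpd {n : ℕ} (α : Fin n →₀ ℕ) :
    Function.End (EuclideanSpace ℝ (Fin n) → ℂ) :=
  ((List.finRange n).map (fun i => (pdOp i) ^ (α i))).prod

/-- The constant-coefficient linear differential operator `Q(D) = Σ_β c_β D^β`. -/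
noncomputable def constCoeffOp {n : ℕ} (c : (Fin n →₀ ℕ) →₀ ℂ) :
    (EuclideanSpace ℝ (Fin n) → ℂ) → EuclideanSpace ℝ (Fin n) → ℂ :=
  fun f => c.sum fun β a => a • mpd β f

/-- For an open set `ω` and `δ`, the shrunk set `ω_δ = {x ∈ ω : dist(x, ωᶜ) > δ}`. -/
def innerSet {n : ℕ} (ω : Set (EuclideanSpace ℝ (Fin n))) (δ : ℝ) :
    Set (EuclideanSpace ℝ (Fin n)) :=
  {x ∈ ω | δ < Metric.infDist x ωᶜ}

namespace HOIE

variable {n : ℕ}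

local notation "EE" => EuclideanSpace ℝ (Fin n)

noncomputable def TT (L : List (Fin n)) : Function.End (EE → ℂ) := (L.map pdOp).prod

@[simp] lemma TT_nil (f : EE → ℂ) : TT ([] : List (Fin n)) f = f := rfl

@[simp] lemma TT_cons (i : Fin n) (L : List (Fin n)) (f : EE → ℂ) :
    TT (i :: L) f = pdOp i (TT L f) := rfl

lemma TT_append (L1 L2 : List (Fin n)) (f : EE → ℂ) : TT (L1 ++ L2) f = TT L1 (TT L2 f) := by
  unfold TT; rw [List.map_append, List.prod_append]; rfl

def αList (α : Fin n →₀ ℕ) : List (Fin n) :=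
  (List.finRange n).flatMap fun i => List.replicate (α i) i

lemma mpd_eq_T (α : Fin n →₀ ℕ) : mpd α = TT (αList α) := by
  unfold mpd TT αList
  rw [List.map_flatMap, List.flatMap_def, List.prod_flatten, List.map_map]
  congr 1
  apply List.map_congr_left
  intro i _
  simp [List.map_replicate, List.prod_replicate]

lemma αList_length (α : Fin n →₀ ℕ) : (αList α).length = α.sum fun _ k => k := by
  unfold αList
  rw [List.length_flatMap]
  rw [Finsupp.sum_fintype _ _ (fun _ => rfl), Fin.sum_univ_def]
  congr 1
  apply List.map_congr_left
  intro i _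
  exact List.length_replicate

lemma αList_count (α : Fin n →₀ ℕ) (i : Fin n) : (αList α).count i = α i := by
  unfold αList
  rw [List.count_flatMap]
  have : ∀ j : Fin n, (List.replicate (α j) j).count i = if i = j then α j else 0 := by
    intro j
    rw [List.count_replicate]
    by_cases h : i = j
    · subst h; simp
    · rw [if_neg (fun hh => h (beq_iff_eq.mp hh).symm), if_neg h]
  rw [show (List.count i ∘ fun i => List.replicate (α i) i) = fun j => List.count i (List.replicate (α j) j) from rfl]
  conv_lhs => rw [List.map_congr_left (fun j _ => this j), ← Fin.sum_univ_def]
  simp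

noncomputable def countF (L : List (Fin n)) : Fin n →₀ ℕ :=
  Finsupp.equivFunOnFinite.symm (fun i => L.count i)

@[simp] lemma countF_apply (L : List (Fin n)) (i : Fin n) : countF L i = L.count i := rfl

lemma countF_sum (L : List (Fin n)) : ((countF L).sum fun _ k => k) = L.length := by
  rw [Finsupp.sum_fintype _ _ (fun _ => rfl)]
  simp only [countF_apply]
  classical
  rw [← List.sum_toFinset_count_eq_length L]
  refine (Finset.sum_subset (Finset.subset_univ _) ?_).symm
  intro x _ hx
  simpa [List.count_eq_zero] using fun h => hx (List.mem_toFinset.mpr h)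

lemma perm_αList_countF (L : List (Fin n)) : L.Perm (αList (countF L)) := by
  rw [List.perm_iff_count]
  intro a
  rw [αList_count]
  rfl

section Analytic

variable {s : Set (EuclideanSpace ℝ (Fin n))} (hs : IsOpen s)

include hs

lemma pd_smooth (i : Fin n) {f : EE → ℂ} (hf : ContDiffOn ℝ (⊤ : ℕ∞) f s) :
    ContDiffOn ℝ (⊤ : ℕ∞) (pdOp i f) s := by
  have h1 : ContDiffOn ℝ (⊤ : ℕ∞) (fderiv ℝ f) s := hf.fderiv_of_isOpen hs (by simp)
  exact h1.clm_apply contDiffOn_const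

lemma pd_congr (i : Fin n) {f g : EE → ℂ} (h : Set.EqOn f g s) :
    Set.EqOn (pdOp i f) (pdOp i g) s := by
  intro x hx
  have hfg : f =ᶠ[nhds x] g := Filter.eventuallyEq_of_mem (hs.mem_nhds hx) h
  show fderiv ℝ f x _ = fderiv ℝ g x _
  rw [hfg.fderiv_eq]

lemma pd_smul (i : Fin n) (a : ℂ) {f : EE → ℂ} (hf : ContDiffOn ℝ (⊤ : ℕ∞) f s) :
    Set.EqOn (pdOp i (a • f)) (a • pdOp i f) s := by
  intro x hx
  have hf' : DifferentiableAt ℝ f x :=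
    (hf.contDiffAt (hs.mem_nhds hx)).differentiableAt (by simp)
  show fderiv ℝ (a • f) x _ = a • fderiv ℝ f x _
  rw [fderiv_const_smul hf']
  rfl

lemma pd_swap (i j : Fin n) {f : EE → ℂ} (hf : ContDiffOn ℝ (⊤ : ℕ∞) f s) :
    Set.EqOn (pdOp i (pdOp j f)) (pdOp j (pdOp i f)) s := by
  intro x hx
  have hx' : ContDiffAt ℝ (⊤ : ℕ∞) f x := hf.contDiffAt (hs.mem_nhds hx)
  have hsym : IsSymmSndFDerivAt ℝ f x := hx'.isSymmSndFDerivAt (by rw [minSmoothness_of_isRCLikeNormedField]; exact WithTop.coe_le_coe.mpr (le_top : (2:ℕ∞) ≤ ⊤))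
  have hd : ContDiffAt ℝ 1 (fderiv ℝ f) x := hx'.fderiv_right (WithTop.coe_le_coe.mpr le_top)
  have hda : DifferentiableAt ℝ (fderiv ℝ f) x := hd.differentiableAt one_ne_zero
  have key : ∀ v w : EE, fderiv ℝ (fun y => fderiv ℝ f y w) x v
      = fderiv ℝ (fderiv ℝ f) x v w := by
    intro v w
    have : fderiv ℝ (fun y => fderiv ℝ f y w) x
        = (ContinuousLinearMap.apply ℝ ℂ w).comp (fderiv ℝ (fderiv ℝ f) x) := by
      change fderiv ℝ ((ContinuousLinearMap.apply ℝ ℂ w) ∘ (fderiv ℝ f)) x = _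
      rw [fderiv_comp x ((ContinuousLinearMap.apply ℝ ℂ w).differentiableAt) hda,
        ContinuousLinearMap.fderiv]
    rw [this]; rfl
  show fderiv ℝ (fun y => fderiv ℝ f y _) x _ = fderiv ℝ (fun y => fderiv ℝ f y _) x _
  rw [key, key, hsym.eq]

lemma TT_smooth (L : List (Fin n)) {f : EE → ℂ} (hf : ContDiffOn ℝ (⊤ : ℕ∞) f s) :
    ContDiffOn ℝ (⊤ : ℕ∞) (TT L f) s := by
  induction L with
  | nil => simpa using hf
  | cons i L ih => rw [TT_cons]; exact pd_smooth hs i ih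

lemma TT_congr (L : List (Fin n)) {f g : EE → ℂ} (h : Set.EqOn f g s) :
    Set.EqOn (TT L f) (TT L g) s := by
  induction L with
  | nil => simpa using h
  | cons i L ih => rw [TT_cons, TT_cons]; exact pd_congr hs i ih

lemma pd_TT (i : Fin n) (L : List (Fin n)) {f : EE → ℂ} (hf : ContDiffOn ℝ (⊤ : ℕ∞) f s) :
    Set.EqOn (pdOp i (TT L f)) (TT L (pdOp i f)) s := by
  induction L with
  | nil => intro x hx; rfl
  | cons j L ih =>
    rw [TT_cons, TT_cons]
    exact ((pd_swap hs i j (TT_smooth hs L hf)).trans (pd_congr hs j ih))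

lemma TT_TT (L1 L2 : List (Fin n)) {f : EE → ℂ} (hf : ContDiffOn ℝ (⊤ : ℕ∞) f s) :
    Set.EqOn (TT L1 (TT L2 f)) (TT L2 (TT L1 f)) s := by
  induction L1 with
  | nil => intro x hx; rfl
  | cons i L1 ih =>
    rw [TT_cons]
    exact (pd_congr hs i ih).trans (pd_TT hs i L2 (TT_smooth hs L1 hf))

lemma TT_perm {L1 L2 : List (Fin n)} (h : L1.Perm L2) {f : EE → ℂ}
    (hf : ContDiffOn ℝ (⊤ : ℕ∞) f s) : Set.EqOn (TT L1 f) (TT L2 f) s := by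
  induction h with
  | nil => intro x hx; rfl
  | cons a h ih => rw [TT_cons, TT_cons]; exact pd_congr hs a ih
  | swap a b L => exact pd_swap hs b a (TT_smooth hs L hf)
  | trans h₁ h₂ ih₁ ih₂ => exact ih₁.trans ih₂

lemma TT_smul (L : List (Fin n)) (a : ℂ) {f : EE → ℂ} (hf : ContDiffOn ℝ (⊤ : ℕ∞) f s) :
    Set.EqOn (TT L (a • f)) (a • TT L f) s := by
  induction L with
  | nil => intro x hx; rfl
  | cons i L ih =>
    rw [TT_cons, TT_cons]
    exact (pd_congr hs i ih).trans (pd_smul hs i a (TT_smooth hs L hf))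

lemma pd_sum (i : Fin n) {ι : Type*} (S : Finset ι) (g : ι → EE → ℂ)
    (hh : ∀ b ∈ S, ContDiffOn ℝ (⊤ : ℕ∞) (g b) s) :
    Set.EqOn (pdOp i (fun x => ∑ b ∈ S, g b x)) (fun x => ∑ b ∈ S, pdOp i (g b) x) s := by
  intro x hx
  have hd : ∀ b ∈ S, DifferentiableAt ℝ (g b) x := fun b hb =>
    ((hh b hb).contDiffAt (hs.mem_nhds hx)).differentiableAt (by simp)
  show fderiv ℝ (fun y => ∑ b ∈ S, g b y) x _ = _
  rw [fderiv_fun_sum hd]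
  simp only [ContinuousLinearMap.coe_sum', Finset.sum_apply]
  rfl

lemma TT_sum (L : List (Fin n)) {ι : Type*} (S : Finset ι) (h : ι → EE → ℂ)
    (hh : ∀ b ∈ S, ContDiffOn ℝ (⊤ : ℕ∞) (h b) s) :
    Set.EqOn (TT L (fun x => ∑ b ∈ S, h b x)) (fun x => ∑ b ∈ S, TT L (h b) x) s := by
  induction L with
  | nil => intro x hx; rfl
  | cons i L ih =>
    rw [TT_cons]
    refine (pd_congr hs i ih).trans ?_
    have := pd_sum hs i S (fun b => TT L (h b)) (fun b hb => TT_smooth hs L (hh b hb))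
    intro x hx
    simpa using this hx

omit hs in
lemma Q_apply (c : (Fin n →₀ ℕ) →₀ ℂ) (f : EE → ℂ) (x : EE) :
    constCoeffOp c f x = ∑ β ∈ c.support, c β • mpd β f x := by
  simp [constCoeffOp, Finsupp.sum, Finset.sum_apply]

lemma Q_smooth (c : (Fin n →₀ ℕ) →₀ ℂ) {f : EE → ℂ} (hf : ContDiffOn ℝ (⊤ : ℕ∞) f s) :
    ContDiffOn ℝ (⊤ : ℕ∞) (constCoeffOp c f) s := by
  have heq : constCoeffOp c f = fun x => ∑ β ∈ c.support, c β • mpd β f x :=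
    funext (Q_apply c f)
  rw [heq]
  refine ContDiffOn.sum fun β _ => ?_
  rw [mpd_eq_T]
  exact (TT_smooth hs _ hf).const_smul _

lemma Q_congr (c : (Fin n →₀ ℕ) →₀ ℂ) {f g : EE → ℂ} (h : Set.EqOn f g s) :
    Set.EqOn (constCoeffOp c f) (constCoeffOp c g) s := by
  intro x hx
  rw [Q_apply, Q_apply]
  refine Finset.sum_congr rfl fun β _ => ?_
  rw [mpd_eq_T]
  rw [TT_congr hs (αList β) h hx]

lemma Q_TT (c : (Fin n →₀ ℕ) →₀ ℂ) (L : List (Fin n)) {f : EE → ℂ}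
    (hf : ContDiffOn ℝ (⊤ : ℕ∞) f s) :
    Set.EqOn (constCoeffOp c (TT L f)) (TT L (constCoeffOp c f)) s := by
  intro x hx
  have hsm : ∀ β ∈ c.support, ContDiffOn ℝ (⊤ : ℕ∞) (fun z => c β • mpd β f z) s := by
    intro β _
    rw [mpd_eq_T]
    exact (TT_smooth hs _ hf).const_smul _
  have hfun : constCoeffOp c f = fun y => ∑ β ∈ c.support, (fun z => c β • mpd β f z) y := by
    funext y; exact Q_apply c f y
  have h1 : TT L (constCoeffOp c f) x = ∑ β ∈ c.support, TT L (fun z => c β • mpd β f z) x := by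
    rw [hfun]
    exact TT_sum hs L c.support _ hsm hx
  rw [Q_apply, h1]
  refine Finset.sum_congr rfl fun β hβ => ?_
  have h2 : TT L (fun z => c β • mpd β f z) x = c β • TT L (mpd β f) x := by
    have := TT_smul hs L (c β) (f := mpd β f) (by rw [mpd_eq_T]; exact TT_smooth hs _ hf) hx
    exact this
  rw [h2]
  congr 1
  rw [mpd_eq_T]
  exact (TT_TT hs L (αList β) hf hx).symm

lemma Qiter_smooth (c : (Fin n →₀ ℕ) →₀ ℂ) (k : ℕ) {f : EE → ℂ}
    (hf : ContDiffOn ℝ (⊤ : ℕ∞) f s) : ContDiffOn ℝ (⊤ : ℕ∞) ((constCoeffOp c)^[k] f) s := by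
  induction k generalizing f with
  | zero => simpa using hf
  | succ k ih =>
    rw [Function.iterate_succ_apply]
    exact ih (Q_smooth hs c hf)

lemma Qiter_TT (c : (Fin n →₀ ℕ) →₀ ℂ) (k : ℕ) (L : List (Fin n)) {f : EE → ℂ}
    (hf : ContDiffOn ℝ (⊤ : ℕ∞) f s) :
    Set.EqOn ((constCoeffOp c)^[k] (TT L f)) (TT L ((constCoeffOp c)^[k] f)) s := by
  induction k with
  | zero => intro x hx; rfl
  | succ k ih =>
    rw [Function.iterate_succ_apply', Function.iterate_succ_apply']
    exact (Q_congr hs c ih).trans (Q_TT hs c L (Qiter_smooth hs c k hf))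

end Analytic

lemma innerSet_open {ω : Set (EuclideanSpace ℝ (Fin n))} (hω : IsOpen ω) (ρ : ℝ) :
    IsOpen (innerSet ω ρ) := by
  have : innerSet ω ρ = ω ∩ {x | ρ < Metric.infDist x ωᶜ} := rfl
  rw [this]
  exact hω.inter (isOpen_lt continuous_const (Metric.continuous_infDist_pt _))

lemma innerSet_subset (ω : Set (EuclideanSpace ℝ (Fin n))) (ρ : ℝ) : innerSet ω ρ ⊆ ω :=
  fun _ hx => hx.1

open MeasureTheory in
lemma N_mono {s t : Set (EuclideanSpace ℝ (Fin n))} (h : s ⊆ t) (f : EE → ℂ) :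
    eLpNorm f 2 (volume.restrict s) ≤ eLpNorm f 2 (volume.restrict t) :=
  eLpNorm_mono_measure f (Measure.restrict_mono h le_rfl)

open MeasureTheory in
lemma N_congr {s : Set (EuclideanSpace ℝ (Fin n))} (hs : MeasurableSet s) {f g : EE → ℂ}
    (h : Set.EqOn f g s) :
    eLpNorm f 2 (volume.restrict s) = eLpNorm g 2 (volume.restrict s) :=
  eLpNorm_congr_ae ((ae_restrict_iff' hs).mpr (ae_of_all _ fun _ hx => h hx))

open Finset in

lemma sum_identity (k : ℕ) (r γ : ℝ) (hr : 0 < r) (N : ℕ → ENNReal) :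
    (∑ i ∈ range (k+1), ENNReal.ofReal ((k.choose i : ℝ) * r ^ (((k-i : ℕ) : ℝ)*γ)) * N (i+1))
    + ENNReal.ofReal (r^γ) *
      (∑ i ∈ range (k+1), ENNReal.ofReal ((k.choose i : ℝ) * r ^ (((k-i : ℕ) : ℝ)*γ)) * N i)
    = ∑ j ∈ range (k+2), ENNReal.ofReal (((k+1).choose j : ℝ) * r ^ (((k+1-j : ℕ) : ℝ)*γ)) * N j := by
  have hw : ∀ j : ℕ, (0:ℝ) ≤ r ^ (((j : ℕ) : ℝ)*γ) := fun j => Real.rpow_nonneg hr.le _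
  -- B transformation
  have hB : ENNReal.ofReal (r^γ) *
      (∑ i ∈ range (k+1), ENNReal.ofReal ((k.choose i : ℝ) * r ^ (((k-i : ℕ) : ℝ)*γ)) * N i)
      = ∑ i ∈ range (k+1), ENNReal.ofReal ((k.choose i : ℝ) * r ^ (((k+1-i : ℕ) : ℝ)*γ)) * N i := by
    rw [Finset.mul_sum]
    refine Finset.sum_congr rfl fun i hi => ?_
    have hik : i ≤ k := Nat.lt_succ_iff.mp (Finset.mem_range.mp hi)
    rw [← mul_assoc, ← ENNReal.ofReal_mul (Real.rpow_nonneg hr.le _)]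
    congr 2
    have h1 : ((k+1-i : ℕ) : ℝ) * γ = ((k-i : ℕ) : ℝ)*γ + γ := by
      have : k + 1 - i = (k - i) + 1 := by omega
      rw [this]; push_cast; ring
    rw [h1, Real.rpow_add hr]
    ring
  rw [hB]
  -- expand target
  have key : ∀ j, ((k+1).choose j : ℝ) = (k.choose j : ℝ) + (if j = 0 then 0 else (k.choose (j-1) : ℝ)) := by
    intro j
    cases j with
    | zero => simp
    | succ j => simp [Nat.choose_succ_succ, Nat.cast_add]; ring
  rw [show k + 2 = (k+1) + 1 from rfl]
  rw [Finset.sum_range_succ' (fun j => ENNReal.ofReal (((k+1).choose j : ℝ) * r ^ (((k+1-j : ℕ) : ℝ)*γ)) * N j) (k+1)]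
  have hsplit : ∀ i ∈ range (k+1),
      ENNReal.ofReal (((k+1).choose (i+1) : ℝ) * r ^ (((k+1-(i+1) : ℕ) : ℝ)*γ)) * N (i+1)
      = ENNReal.ofReal ((k.choose i : ℝ) * r ^ (((k-i : ℕ) : ℝ)*γ)) * N (i+1)
        + ENNReal.ofReal ((k.choose (i+1) : ℝ) * r ^ (((k+1-(i+1) : ℕ) : ℝ)*γ)) * N (i+1) := by
    intro i hi
    have h2 : (k+1-(i+1) : ℕ) = k - i := by omega
    rw [h2]
    have : (((k+1).choose (i+1) : ℝ)) = (k.choose i : ℝ) + (k.choose (i+1) : ℝ) := by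
      rw [Nat.choose_succ_succ]; push_cast; ring
    rw [this, add_mul, ENNReal.ofReal_add (by positivity) (by positivity), add_mul]
  rw [Finset.sum_congr rfl hsplit, Finset.sum_add_distrib]
  have hg0 : ENNReal.ofReal (((k+1).choose 0 : ℝ) * r ^ (((k+1-0 : ℕ) : ℝ)*γ)) * N 0
      = ENNReal.ofReal ((k.choose 0 : ℝ) * r ^ (((k+1-0 : ℕ) : ℝ)*γ)) * N 0 := by
    norm_num
  rw [hg0]
  have hback : (∑ i ∈ range (k+1),
        ENNReal.ofReal ((k.choose (i+1) : ℝ) * r ^ (((k+1-(i+1) : ℕ) : ℝ)*γ)) * N (i+1))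
      + ENNReal.ofReal ((k.choose 0 : ℝ) * r ^ (((k+1-0 : ℕ) : ℝ)*γ)) * N 0
      = ∑ j ∈ range (k+2), ENNReal.ofReal ((k.choose j : ℝ) * r ^ (((k+1-j : ℕ) : ℝ)*γ)) * N j := by
    rw [show k + 2 = (k+1) + 1 from rfl,
      Finset.sum_range_succ' (fun j => ENNReal.ofReal ((k.choose j : ℝ) * r ^ (((k+1-j : ℕ) : ℝ)*γ)) * N j) (k+1)]
  have hlast : ∑ j ∈ range (k+2), ENNReal.ofReal ((k.choose j : ℝ) * r ^ (((k+1-j : ℕ) : ℝ)*γ)) * N j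
      = ∑ j ∈ range (k+1), ENNReal.ofReal ((k.choose j : ℝ) * r ^ (((k+1-j : ℕ) : ℝ)*γ)) * N j := by
    rw [show k + 2 = (k+1) + 1 from rfl, Finset.sum_range_succ]
    simp [Nat.choose_succ_self]
  calc (∑ i ∈ range (k+1), ENNReal.ofReal ((k.choose i : ℝ) * r ^ (((k-i : ℕ) : ℝ)*γ)) * N (i+1))
      + ∑ i ∈ range (k+1), ENNReal.ofReal ((k.choose i : ℝ) * r ^ (((k+1-i : ℕ) : ℝ)*γ)) * N i
      = (∑ i ∈ range (k+1), ENNReal.ofReal ((k.choose i : ℝ) * r ^ (((k-i : ℕ) : ℝ)*γ)) * N (i+1))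
        + ((∑ i ∈ range (k+1), ENNReal.ofReal ((k.choose (i+1) : ℝ) * r ^ (((k+1-(i+1) : ℕ) : ℝ)*γ)) * N (i+1))
          + ENNReal.ofReal ((k.choose 0 : ℝ) * r ^ (((k+1-0 : ℕ) : ℝ)*γ)) * N 0) := by
        rw [hback, hlast]
    _ = _ := by abel

end HOIE

open HOIE

/-- Higher-order interior estimate from the one-step estimate: if for all `t > 0`,
`ρ ≥ 0`, smooth `v` and `|α| ≤ m ν` one has
`‖D^α v‖_{L²(ω_{ρ+t})} ≤ C₁ (‖Q^μ v‖_{L²(ω_ρ)} + t^{-γ} ‖v‖_{L²(ω_ρ)})`,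
then for all `k`, all `|α| ≤ k m ν` and `δ > 0`,
`‖D^α u‖_{L²(ω_δ)} ≤ C₁^k Σ_{i=0}^{k} binom(k,i) (k/δ)^{(k-i)γ} ‖Q^{μ i} u‖_{L²(ω)}`. -/
theorem higher_order_interior_estimate {n : ℕ} (m ν μ : ℕ)
    (hm : 1 ≤ m) (hν : 1 ≤ ν) (hμ : 1 ≤ μ)
    (ω : Set (EuclideanSpace ℝ (Fin n))) (hω : IsOpen ω)
    (hbdd : Bornology.IsBounded ω)
    (c : (Fin n →₀ ℕ) →₀ ℂ)
    (C₁ γ : ℝ) (hC₁ : 0 < C₁) (hγ : γ = ((μ : ℝ) / ν) * m * μ)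
    (hstep : ∀ t > (0 : ℝ), ∀ ρ ≥ (0 : ℝ), ∀ v : EuclideanSpace ℝ (Fin n) → ℂ,
      ContDiffOn ℝ (⊤ : ℕ∞) v (innerSet ω ρ) → ∀ α : Fin n →₀ ℕ, (α.sum fun _ k => k) ≤ m * ν →
        eLpNorm (mpd α v) 2 (volume.restrict (innerSet ω (ρ + t))) ≤
          ENNReal.ofReal C₁ *
            (eLpNorm ((constCoeffOp c)^[μ] v) 2 (volume.restrict (innerSet ω ρ)) +
              ENNReal.ofReal (t ^ (-γ)) *
                eLpNorm v 2 (volume.restrict (innerSet ω ρ)))) :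
    ∀ k : ℕ, ∀ α : Fin n →₀ ℕ, (α.sum fun _ k => k) ≤ k * m * ν → ∀ δ > (0 : ℝ),
      ∀ u : EuclideanSpace ℝ (Fin n) → ℂ, ContDiffOn ℝ (⊤ : ℕ∞) u ω →
        eLpNorm (mpd α u) 2 (volume.restrict (innerSet ω δ)) ≤
          ENNReal.ofReal (C₁ ^ k) * ∑ i ∈ Finset.range (k + 1),
            ENNReal.ofReal ((k.choose i : ℝ) * ((k : ℝ) / δ) ^ (((k - i : ℕ) : ℝ) * γ)) *
              eLpNorm ((constCoeffOp c)^[μ * i] u) 2 (volume.restrict ω) := by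
  have key : ∀ k : ℕ, ∀ L : List (Fin n), L.length ≤ k * m * ν → ∀ δ > (0:ℝ),
      ∀ u : EuclideanSpace ℝ (Fin n) → ℂ, ContDiffOn ℝ (⊤ : ℕ∞) u ω →
      eLpNorm (TT L u) 2 (volume.restrict (innerSet ω δ)) ≤
        ENNReal.ofReal (C₁ ^ k) * ∑ i ∈ Finset.range (k + 1),
          ENNReal.ofReal ((k.choose i : ℝ) * ((k : ℝ) / δ) ^ (((k - i : ℕ) : ℝ) * γ)) *
            eLpNorm ((constCoeffOp c)^[μ * i] u) 2 (volume.restrict ω) := by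
    intro k
    induction k with
    | zero =>
      intro L hL δ hδ u hu
      have hL0 : L = [] := List.eq_nil_of_length_eq_zero (by omega)
      subst hL0
      have hsum : ENNReal.ofReal (C₁ ^ 0) * ∑ i ∈ Finset.range (0 + 1),
          ENNReal.ofReal (((0:ℕ).choose i : ℝ) * (((0:ℕ) : ℝ) / δ) ^ ((((0:ℕ) - i : ℕ) : ℝ) * γ)) *
            eLpNorm ((constCoeffOp c)^[μ * i] u) 2 (volume.restrict ω)
          = eLpNorm u 2 (volume.restrict ω) := by
        rw [Finset.sum_range_one]
        norm_num
      rw [hsum]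
      simpa using N_mono (innerSet_subset ω δ) u
    | succ k ih =>
      intro L hL δ hδ u hu
      have hk1 : (0:ℝ) < (k:ℝ) + 1 := by positivity
      have hδ' : δ ≠ 0 := ne_of_gt hδ
      set t : ℝ := δ / ((k:ℝ)+1) with ht_def
      set ρ : ℝ := (k:ℝ) * δ / ((k:ℝ)+1) with hρ_def
      have ht : 0 < t := by positivity
      have hρ : 0 ≤ ρ := by positivity
      have hρt : ρ + t = δ := by rw [hρ_def, ht_def]; field_simp
      set r : ℝ := ((k:ℝ)+1) / δ with hr_def
      have hr : 0 < r := by positivity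
      set L₀ := L.take (m*ν) with hL₀_def
      set L' := L.drop (m*ν) with hL'_def
      have hL₀ : L₀.length ≤ m * ν := by
        rw [hL₀_def, List.length_take]; omega
      have hL' : L'.length ≤ k * m * ν := by
        rw [hL'_def, List.length_drop]
        have h1 : (k+1) * m * ν = k * m * ν + m * ν := by ring
        have h2 : L.length ≤ (k+1) * m * ν := hL
        omega
      set β := countF L₀ with hβ_def
      have hβ : (β.sum fun _ k => k) ≤ m * ν := by rw [hβ_def, countF_sum]; exact hL₀
      set v := TT L' u with hv_def
      have hv : ContDiffOn ℝ (⊤ : ℕ∞) v ω := TT_smooth hω L' hu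
      have step := hstep t ht ρ hρ v (hv.mono (innerSet_subset ω ρ)) β hβ
      rw [hρt] at step
      have e1 : TT L u = TT L₀ v := by
        rw [hv_def, ← TT_append, hL₀_def, hL'_def, List.take_append_drop]
      have e2 : Set.EqOn (TT L₀ v) (mpd β v) ω := by
        rw [hβ_def, mpd_eq_T]
        exact TT_perm hω (perm_αList_countF L₀) hv
      have e3 : eLpNorm (TT L u) 2 (volume.restrict (innerSet ω δ))
          = eLpNorm (mpd β v) 2 (volume.restrict (innerSet ω δ)) := by
        rw [e1]
        exact N_congr (innerSet_open hω δ).measurableSet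
          (fun x hx => e2 (innerSet_subset ω δ hx))
      -- Bound A
      have hQv : eLpNorm ((constCoeffOp c)^[μ] v) 2 (volume.restrict (innerSet ω ρ))
          = eLpNorm (TT L' ((constCoeffOp c)^[μ] u)) 2 (volume.restrict (innerSet ω ρ)) := by
        refine N_congr (innerSet_open hω ρ).measurableSet (fun x hx => ?_)
        exact Qiter_TT hω c μ L' hu (innerSet_subset ω ρ hx)
      have hA : eLpNorm ((constCoeffOp c)^[μ] v) 2 (volume.restrict (innerSet ω ρ)) ≤
          ENNReal.ofReal (C₁ ^ k) * ∑ i ∈ Finset.range (k+1),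
            ENNReal.ofReal ((k.choose i : ℝ) * r ^ (((k-i : ℕ) : ℝ) * γ)) *
              eLpNorm ((constCoeffOp c)^[μ * (i+1)] u) 2 (volume.restrict ω) := by
        rw [hQv]
        rcases Nat.eq_zero_or_pos k with hk0 | hkpos
        · subst hk0
          have hL'0 : L' = [] := List.eq_nil_of_length_eq_zero (by omega)
          have hsum : ENNReal.ofReal (C₁ ^ 0) * ∑ i ∈ Finset.range (0+1),
              ENNReal.ofReal (((0:ℕ).choose i : ℝ) * r ^ ((((0:ℕ)-i : ℕ) : ℝ) * γ)) *
                eLpNorm ((constCoeffOp c)^[μ * (i+1)] u) 2 (volume.restrict ω)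
              = eLpNorm ((constCoeffOp c)^[μ] u) 2 (volume.restrict ω) := by
            rw [Finset.sum_range_one]
            norm_num
          rw [hL'0, hsum]
          simpa using N_mono (innerSet_subset ω ρ) ((constCoeffOp c)^[μ] u)
        · have hρpos : 0 < ρ := by
            rw [hρ_def]
            have hkr : (0:ℝ) < (k:ℝ) := by exact_mod_cast hkpos
            positivity
          have hk0' : (k:ℝ) ≠ 0 := by
            have : (0:ℝ) < (k:ℝ) := by exact_mod_cast hkpos
            exact ne_of_gt this
          have hrρ : (k:ℝ) / ρ = r := by
            rw [hρ_def, hr_def]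
            field_simp
          have hIH := ih L' hL' ρ hρpos ((constCoeffOp c)^[μ] u) (Qiter_smooth hω c μ hu)
          rw [hrρ] at hIH
          refine hIH.trans (le_of_eq ?_)
          congr 1
          refine Finset.sum_congr rfl fun i _ => ?_
          congr 1
          rw [Nat.mul_succ, Function.iterate_add_apply]
      -- Bound B
      have hB : eLpNorm v 2 (volume.restrict (innerSet ω ρ)) ≤
          ENNReal.ofReal (C₁ ^ k) * ∑ i ∈ Finset.range (k+1),
            ENNReal.ofReal ((k.choose i : ℝ) * r ^ (((k-i : ℕ) : ℝ) * γ)) *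
              eLpNorm ((constCoeffOp c)^[μ * i] u) 2 (volume.restrict ω) := by
        rcases Nat.eq_zero_or_pos k with hk0 | hkpos
        · subst hk0
          have hL'0 : L' = [] := List.eq_nil_of_length_eq_zero (by omega)
          have hsum : ENNReal.ofReal (C₁ ^ 0) * ∑ i ∈ Finset.range (0+1),
              ENNReal.ofReal (((0:ℕ).choose i : ℝ) * r ^ ((((0:ℕ)-i : ℕ) : ℝ) * γ)) *
                eLpNorm ((constCoeffOp c)^[μ * i] u) 2 (volume.restrict ω)
              = eLpNorm u 2 (volume.restrict ω) := by
            rw [Finset.sum_range_one]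
            norm_num
          rw [hv_def, hL'0, hsum]
          simpa using N_mono (innerSet_subset ω ρ) u
        · have hρpos : 0 < ρ := by
            rw [hρ_def]
            have hkr : (0:ℝ) < (k:ℝ) := by exact_mod_cast hkpos
            positivity
          have hk0' : (k:ℝ) ≠ 0 := by
            have : (0:ℝ) < (k:ℝ) := by exact_mod_cast hkpos
            exact ne_of_gt this
          have hrρ : (k:ℝ) / ρ = r := by
            rw [hρ_def, hr_def]
            field_simp
          have hIH := ih L' hL' ρ hρpos u hu
          rw [hrρ] at hIH
          exact hIH
      -- t ^ (-γ) = r ^ γ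
      have htr : t ^ (-γ) = r ^ γ := by
        have hrt : r = t⁻¹ := by rw [hr_def, ht_def, inv_div]
        rw [hrt, Real.inv_rpow ht.le, ← Real.rpow_neg ht.le]
      -- assemble
      have main : eLpNorm (TT L u) 2 (volume.restrict (innerSet ω δ)) ≤
          ENNReal.ofReal (C₁ ^ (k+1)) *
            ((∑ i ∈ Finset.range (k+1),
              ENNReal.ofReal ((k.choose i : ℝ) * r ^ (((k-i : ℕ) : ℝ) * γ)) *
                eLpNorm ((constCoeffOp c)^[μ * (i+1)] u) 2 (volume.restrict ω))
            + ENNReal.ofReal (r ^ γ) * ∑ i ∈ Finset.range (k+1),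
              ENNReal.ofReal ((k.choose i : ℝ) * r ^ (((k-i : ℕ) : ℝ) * γ)) *
                eLpNorm ((constCoeffOp c)^[μ * i] u) 2 (volume.restrict ω)) := by
        rw [e3]
        refine step.trans ?_
        rw [htr]
        have hofr : ENNReal.ofReal (C₁ ^ (k+1)) =
            ENNReal.ofReal C₁ * ENNReal.ofReal (C₁ ^ k) := by
          rw [← ENNReal.ofReal_mul hC₁.le, ← pow_succ']
        rw [hofr]
        calc ENNReal.ofReal C₁ *
            (eLpNorm ((constCoeffOp c)^[μ] v) 2 (volume.restrict (innerSet ω ρ)) +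
              ENNReal.ofReal (r ^ γ) * eLpNorm v 2 (volume.restrict (innerSet ω ρ)))
            ≤ ENNReal.ofReal C₁ *
              ((ENNReal.ofReal (C₁ ^ k) * ∑ i ∈ Finset.range (k+1),
                ENNReal.ofReal ((k.choose i : ℝ) * r ^ (((k-i : ℕ) : ℝ) * γ)) *
                  eLpNorm ((constCoeffOp c)^[μ * (i+1)] u) 2 (volume.restrict ω))
              + ENNReal.ofReal (r ^ γ) * (ENNReal.ofReal (C₁ ^ k) * ∑ i ∈ Finset.range (k+1),
                ENNReal.ofReal ((k.choose i : ℝ) * r ^ (((k-i : ℕ) : ℝ) * γ)) *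
                  eLpNorm ((constCoeffOp c)^[μ * i] u) 2 (volume.restrict ω))) := by
              exact mul_le_mul_right (add_le_add hA (mul_le_mul_right hB _)) _
          _ = _ := by ring
      refine main.trans (le_of_eq ?_)
      rw [sum_identity k r γ hr
        (fun j => eLpNorm ((constCoeffOp c)^[μ * j] u) 2 (volume.restrict ω))]
      congr 1
      refine Finset.sum_congr rfl fun j _ => ?_
      rw [hr_def]
      push_cast
      ring_nf
  intro k α hα δ hδ u hu
  rw [mpd_eq_T]
  exact key k (αList α) (by rw [αList_length]; exact hα) δ hδ u hu
end

section
/- Let (M_p) satisfy logarithmic convexity, stability, and (p!)^d ⊂ M_p, with d = μ/ν rational and m a positive integer. If u ∈ C^∞(Ω) satisfies: for every compact H ⊂ Ω there exists A₃ > 0 such that ‖D^α u‖_{L²(H)} ≤ A₃^{k+1} M_{kmμ} whenever (k-1)νm ≤ |α| ≤ kνm, then u ∈ R_{M^d}(Ω), i.e., for every compact H ⊂ Ω there exists C > 0 with ‖D^α u‖_{L²(H)} ≤ C^{|α|+1} (M_{|α|})^d for all multi-indices α. -/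
open MeasureTheory

/-- The length `|α|` of a multi-index. -/
def mdeg {n : ℕ} (α : Fin n →₀ ℕ) : ℕ := α.sum fun _ k => k

/-- Iterated supermultiplicativity: `M x ^ t ≤ M (t * x)`. -/
lemma aux_pow_super (M : ℕ → ℝ) (hpos : ∀ p, 0 < M p) (h0 : M 0 = 1)
    (hsuper : ∀ x y, M x * M y ≤ M (x + y)) :
    ∀ t x, M x ^ t ≤ M (t * x) := by
  intro t x
  induction t with
  | zero => simp [h0]
  | succ t ih =>
      calc M x ^ (t + 1) = M x ^ t * M x := pow_succ _ _
        _ ≤ M (t * x) * M x := mul_le_mul_of_nonneg_right ih (hpos x).le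
        _ ≤ M (t * x + x) := hsuper _ _
        _ = M ((t + 1) * x) := by rw [Nat.succ_mul]

/-- Iterated submultiplicativity: `M (t * x) ≤ H₁ ^ (t * t * x) * M x ^ t`. -/
lemma aux_pow_sub (M : ℕ → ℝ) (hpos : ∀ p, 0 < M p) (h0 : M 0 = 1)
    (H₁ : ℝ) (hH₁ : 1 ≤ H₁)
    (hsub : ∀ x y, M (x + y) ≤ H₁ ^ (x + y) * (M x * M y)) :
    ∀ t x, M (t * x) ≤ H₁ ^ (t * t * x) * M x ^ t := by
  intro t x
  induction t with
  | zero => simp [h0]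
  | succ t ih =>
      have hH₁0 : (0:ℝ) < H₁ := lt_of_lt_of_le one_pos hH₁
      calc M ((t + 1) * x) = M (t * x + x) := by rw [Nat.succ_mul]
        _ ≤ H₁ ^ (t * x + x) * (M (t * x) * M x) := hsub _ _
        _ ≤ H₁ ^ (t * x + x) * ((H₁ ^ (t * t * x) * M x ^ t) * M x) := by
            have h2 := mul_le_mul_of_nonneg_right ih (hpos x).le
            exact mul_le_mul_of_nonneg_left h2 (pow_nonneg hH₁0.le _)
        _ = H₁ ^ (t * x + x + t * t * x) * M x ^ (t + 1) := by
            rw [pow_add, pow_succ]; ring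
        _ ≤ H₁ ^ ((t + 1) * (t + 1) * x) * M x ^ (t + 1) := by
            have hexp : t * x + x + t * t * x ≤ (t + 1) * (t + 1) * x := by nlinarith
            exact mul_le_mul_of_nonneg_right
              (pow_le_pow_right₀ hH₁ hexp) (pow_nonneg (hpos x).le _)

/-- Let `(M p)` satisfy logarithmic convexity, stability, and `(p!)^d ⊂ M_p`, with
`d = μ/ν` rational. If `u ∈ C^∞(Ω)` satisfies: for every compact `H ⊂ Ω` there exists
`A₃ > 0` with `‖D^α u‖_{L²(H)} ≤ A₃^(k+1) M (k m μ)` whenever `(k-1)νm ≤ |α| ≤ kνm`,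
then `u ∈ R_{M^d}(Ω)`: for every compact `H ⊂ Ω` there is `C > 0` with
`‖D^α u‖_{L²(H)} ≤ C^(|α|+1) (M |α|)^d` for all multi-indices `α`. -/
theorem roumieu_membership {n : ℕ} (M : ℕ → ℝ) (hpos : ∀ p, 0 < M p) (h0 : M 0 = 1)
    (hlc : ∀ p : ℕ, 1 ≤ p → (M p) ^ 2 ≤ M (p - 1) * M (p + 1))
    (hstab : ∃ H > (0 : ℝ), ∀ p j : ℕ, j ≤ p →
      (p.choose j : ℝ) * (M (p - j) * M j) ≤ M p ∧ M p ≤ H ^ p * (M (p - j) * M j))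
    (m μ ν : ℕ) (hm : 1 ≤ m) (hμ : 1 ≤ μ) (hν : 1 ≤ ν)
    (d : ℝ) (hd : d = (μ : ℝ) / ν)
    (L C₀ : ℝ) (hL : 0 < L) (hC₀ : 0 < C₀)
    (hfact : ∀ p : ℕ, (p.factorial : ℝ) ^ d ≤ C₀ * L ^ p * M p)
    (Ω : Set (EuclideanSpace ℝ (Fin n))) (hΩ : IsOpen Ω)
    (u : EuclideanSpace ℝ (Fin n) → ℂ) (hu : ContDiffOn ℝ (⊤ : ℕ∞) u Ω)
    (hbound : ∀ H ⊆ Ω, IsCompact H → ∃ A₃ > (0 : ℝ), ∀ k : ℕ, ∀ α : Fin n →₀ ℕ,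
      (k - 1) * ν * m ≤ mdeg α → mdeg α ≤ k * ν * m →
        eLpNorm (mpd α u) 2 (volume.restrict H) ≤
          ENNReal.ofReal (A₃ ^ (k + 1) * M (k * m * μ))) :
    ∀ H ⊆ Ω, IsCompact H → ∃ C > (0 : ℝ), ∀ α : Fin n →₀ ℕ,
      eLpNorm (mpd α u) 2 (volume.restrict H) ≤
        ENNReal.ofReal (C ^ (mdeg α + 1) * (M (mdeg α)) ^ d) := by
  intro K hK hKc
  obtain ⟨A₃, hA₃, hA⟩ := hbound K hK hKc
  obtain ⟨H, hHpos, hst⟩ := hstab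
  set H₁ : ℝ := max H 1 with hH₁def
  have hH₁ : (1:ℝ) ≤ H₁ := le_max_right _ _
  have hH₁0 : (0:ℝ) < H₁ := lt_of_lt_of_le one_pos hH₁
  -- supermultiplicativity
  have hsuper : ∀ x y, M x * M y ≤ M (x + y) := by
    intro x y
    have h := (hst (x + y) y (Nat.le_add_left y x)).1
    rw [Nat.add_sub_cancel] at h
    have hc : (1:ℝ) ≤ ((x + y).choose y : ℝ) := by
      exact_mod_cast Nat.one_le_iff_ne_zero.mpr (Nat.choose_pos (Nat.le_add_left y x)).ne'
    nlinarith [mul_pos (hpos x) (hpos y)]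
  -- submultiplicativity
  have hsub : ∀ x y, M (x + y) ≤ H₁ ^ (x + y) * (M x * M y) := by
    intro x y
    have h := (hst (x + y) y (Nat.le_add_left y x)).2
    rw [Nat.add_sub_cancel] at h
    refine le_trans h (mul_le_mul_of_nonneg_right ?_ ?_)
    · exact pow_le_pow_left₀ hHpos.le (le_max_left _ _) _
    · exact mul_nonneg (hpos x).le (hpos y).le
  set b : ℕ := ν * m with hbdef
  have hb : 1 ≤ b := by have := Nat.mul_le_mul hν hm; simpa using this
  -- finite sup of M over [0, b]
  set E₁ : ℝ := max ((Finset.range (b + 1)).sup' ⟨0, by simp⟩ M) 1 with hE₁def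
  have hE₁ : (1:ℝ) ≤ E₁ := le_max_right _ _
  have hMle : ∀ r, r ≤ b → M r ≤ E₁ := by
    intro r hr
    exact le_trans (Finset.le_sup' M (Finset.mem_range.mpr (by omega))) (le_max_left _ _)
  set D : ℝ := H₁ ^ ((μ * μ + μ) * (b + 1)) * E₁ ^ μ with hDdef
  have hD1 : (1:ℝ) ≤ D := by
    have h1 : (1:ℝ) ≤ H₁ ^ ((μ * μ + μ) * (b + 1)) := one_le_pow₀ hH₁
    have h2 : (1:ℝ) ≤ E₁ ^ μ := one_le_pow₀ hE₁
    nlinarith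
  set A₁ : ℝ := max A₃ 1 with hA₁def
  have hA₁ : (1:ℝ) ≤ A₁ := le_max_right _ _
  refine ⟨A₁ * D, by nlinarith, ?_⟩
  intro α
  set a : ℕ := mdeg α with hadef
  set k : ℕ := if a = 0 then 0 else (a - 1) / b + 1 with hkdef
  have hk1 : (k - 1) * b ≤ a := by
    by_cases ha : a = 0
    · simp [hkdef, ha]
    · simp only [hkdef, if_neg ha, Nat.add_sub_cancel]
      exact le_trans (Nat.div_mul_le_self (a - 1) b) (Nat.sub_le a 1)
  have hk2 : a ≤ k * b := by
    by_cases ha : a = 0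
    · simp [ha]
    · simp only [hkdef, if_neg ha]
      have h1 := Nat.div_add_mod (a - 1) b
      have h2 : (a - 1) % b < b := Nat.mod_lt _ (by omega)
      have h3 : ((a - 1) / b + 1) * b = b * ((a - 1) / b) + b := by ring
      rw [h3]
      omega
  have hk3 : k ≤ a := by
    by_cases ha : a = 0
    · simp [hkdef, ha]
    · simp only [hkdef, if_neg ha]
      have := Nat.div_le_self (a - 1) b
      have hble : (a - 1) / b ≤ a - 1 := by
        calc (a - 1) / b ≤ (a - 1) / 1 := Nat.div_le_div_left hb (by omega)
          _ = a - 1 := Nat.div_one _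
      omega
  have hkb : k * b ≤ a + b := by
    rcases Nat.eq_zero_or_pos k with hk0 | hkpos
    · simp [hk0]
    · obtain ⟨j, hj⟩ := Nat.exists_eq_succ_of_ne_zero hkpos.ne'
      have hj' : j * b ≤ a := by rw [hj] at hk1; simpa using hk1
      rw [hj, Nat.succ_mul]
      omega
  refine le_trans (hA k α ?_ ?_) ?_
  · rw [Nat.mul_assoc]; exact hk1
  · rw [Nat.mul_assoc]; exact hk2
  apply ENNReal.ofReal_le_ofReal
  -- core real inequality
  have hq : a ≤ k * b := hk2
  -- Step 1-5 : M (k*m*μ) ^ ν ≤ D ^ (a+1) * M a ^ μ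
  have key : M (k * m * μ) ^ ν ≤ D ^ (a + 1) * M a ^ μ := by
    have s1 : M (k * m * μ) ^ ν ≤ M (μ * (k * b)) := by
      have h := aux_pow_super M hpos h0 hsuper ν (k * m * μ)
      have he : ν * (k * m * μ) = μ * (k * b) := by rw [hbdef]; ring
      rwa [he] at h
    have s2 : M (μ * (k * b)) ≤ H₁ ^ (μ * μ * (k * b)) * M (k * b) ^ μ :=
      aux_pow_sub M hpos h0 H₁ hH₁ hsub μ (k * b)
    have s3 : M (k * b) ≤ H₁ ^ (k * b) * (M a * E₁) := by
      have h := hsub a (k * b - a)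
      rw [Nat.add_sub_cancel' hq] at h
      refine le_trans h (mul_le_mul_of_nonneg_left ?_ (pow_nonneg hH₁0.le _))
      exact mul_le_mul_of_nonneg_left (hMle _ (by omega)) (hpos a).le
    have s4 : M (k * b) ^ μ ≤ (H₁ ^ (k * b)) ^ μ * (M a ^ μ * E₁ ^ μ) := by
      have h4 := pow_le_pow_left₀ (hpos (k * b)).le s3 μ
      rwa [mul_pow, mul_pow] at h4
    have s5 : M (k * m * μ) ^ ν ≤
        H₁ ^ ((μ * μ + μ) * (k * b)) * E₁ ^ μ * M a ^ μ := by
      calc M (k * m * μ) ^ ν ≤ M (μ * (k * b)) := s1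
        _ ≤ H₁ ^ (μ * μ * (k * b)) * M (k * b) ^ μ := s2
        _ ≤ H₁ ^ (μ * μ * (k * b)) * ((H₁ ^ (k * b)) ^ μ * (M a ^ μ * E₁ ^ μ)) :=
            mul_le_mul_of_nonneg_left s4 (pow_nonneg hH₁0.le _)
        _ = H₁ ^ ((μ * μ + μ) * (k * b)) * E₁ ^ μ * M a ^ μ := by
            rw [← pow_mul,
              show (μ * μ + μ) * (k * b) = μ * μ * (k * b) + k * b * μ from by ring,
              pow_add]
            ring
    refine le_trans s5 ?_
    have hexp : (μ * μ + μ) * (k * b) ≤ (μ * μ + μ) * (b + 1) * (a + 1) := by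
      have h1 : k * b ≤ (b + 1) * (a + 1) := by nlinarith
      calc (μ * μ + μ) * (k * b) ≤ (μ * μ + μ) * ((b + 1) * (a + 1)) :=
            Nat.mul_le_mul_left _ h1
        _ = (μ * μ + μ) * (b + 1) * (a + 1) := by ring
    have hE₁pow : E₁ ^ μ ≤ (E₁ ^ μ) ^ (a + 1) :=
      le_self_pow₀ (one_le_pow₀ hE₁) (by omega)
    have hH₁pow : H₁ ^ ((μ * μ + μ) * (k * b)) ≤
        (H₁ ^ ((μ * μ + μ) * (b + 1))) ^ (a + 1) := by
      rw [← pow_mul]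
      exact pow_le_pow_right₀ hH₁ hexp
    calc H₁ ^ ((μ * μ + μ) * (k * b)) * E₁ ^ μ * M a ^ μ
        ≤ (H₁ ^ ((μ * μ + μ) * (b + 1))) ^ (a + 1) * (E₁ ^ μ) ^ (a + 1) * M a ^ μ := by
          have hMa : (0:ℝ) ≤ M a ^ μ := pow_nonneg (hpos a).le _
          refine mul_le_mul_of_nonneg_right ?_ hMa
          exact mul_le_mul hH₁pow hE₁pow (pow_nonneg (by linarith) _)
            (pow_nonneg (pow_nonneg hH₁0.le _) _)
      _ = D ^ (a + 1) * M a ^ μ := by rw [hDdef, mul_pow]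
  -- Step 6 : extract the d-th power via rpow
  have hν0 : (ν:ℝ) ≠ 0 := by positivity
  have hX : (0:ℝ) < M (k * m * μ) := hpos _
  have hstep6 : M (k * m * μ) ≤ D ^ (a + 1) * M a ^ d := by
    have hXeq : M (k * m * μ) = (M (k * m * μ) ^ (ν:ℕ)) ^ ((ν:ℝ)⁻¹) := by
      rw [← Real.rpow_natCast (M (k * m * μ)) ν, ← Real.rpow_mul hX.le,
        mul_inv_cancel₀ hν0, Real.rpow_one]
    rw [hXeq]
    have h1 : (M (k * m * μ) ^ (ν:ℕ)) ^ ((ν:ℝ)⁻¹) ≤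
        (D ^ (a + 1) * M a ^ (μ:ℕ)) ^ ((ν:ℝ)⁻¹) :=
      Real.rpow_le_rpow (pow_nonneg hX.le _) key (by positivity)
    refine le_trans h1 ?_
    rw [Real.mul_rpow (pow_nonneg (by linarith : (0:ℝ) ≤ D) _) (pow_nonneg (hpos a).le _)]
    have h2 : ((M a ^ (μ:ℕ) : ℝ)) ^ ((ν:ℝ)⁻¹) = M a ^ d := by
      rw [← Real.rpow_natCast (M a) μ, ← Real.rpow_mul (hpos a).le, hd]
      norm_num [div_eq_mul_inv]
    rw [h2]
    refine mul_le_mul_of_nonneg_right ?_ (Real.rpow_nonneg (hpos a).le _)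
    have h3 : (1:ℝ) ≤ D ^ (a + 1) := one_le_pow₀ hD1
    calc ((D ^ (a + 1) : ℝ)) ^ ((ν:ℝ)⁻¹) ≤ (D ^ (a + 1)) ^ (1:ℝ) := by
          apply Real.rpow_le_rpow_of_exponent_le h3
          have hν1 : (1:ℝ) ≤ (ν:ℝ) := by exact_mod_cast hν
          rw [inv_eq_one_div]
          exact div_le_one_of_le₀ hν1 (by linarith)
      _ = D ^ (a + 1) := Real.rpow_one _
  -- Step 7 : combine
  have h7 : A₃ ^ (k + 1) ≤ A₁ ^ (a + 1) := by
    calc A₃ ^ (k + 1) ≤ A₁ ^ (k + 1) :=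
          pow_le_pow_left₀ hA₃.le (le_max_left _ _) _
      _ ≤ A₁ ^ (a + 1) := pow_le_pow_right₀ hA₁ (by omega)
  calc A₃ ^ (k + 1) * M (k * m * μ)
      ≤ A₁ ^ (a + 1) * (D ^ (a + 1) * M a ^ d) := by
        refine mul_le_mul h7 hstep6 hX.le (pow_nonneg (by linarith) _)
    _ = (A₁ * D) ^ (a + 1) * M a ^ d := by rw [mul_pow]; ring
end
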